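/- Let u : ℝ × (0,∞) → ℝ be three times continuously differentiable with H_a u = 0 on ℝ × (0,∞), extending continuously together with ∂_t u to ℝ × [0,∞), with t ↦ u(t,0) differentiable, and such that for every t ∈ ℝ: lim_{y→0⁺} y^a ∂_y u(t,y) = −(1/d_γ) f(u(t,0)), lim_{y→∞} y^a ∂_y u(t,y) ∂_t u(t,y) = 0, and lim_{y→0⁺} y^a ∂_y u(t,y) ∂_t u(t,y) = −(1/d_γ) f(u(t,0)) ∂_t u(t,0). Assume that for every compact interval I ⊂ ℝ there is an integrable function g : (0,∞) → ℝ such that y^a(|∂_t u|² + |∂_y u|² + |∂_t u||∂_{tt}u| + |∂_y u||∂_{ty}u|)(t,y) ≤ g(y) for all t ∈ I and y > 0. Define V(t) = (1/2) ∫₀^∞ y^a ((∂_t u(t,y))² − (∂_y u(t,y))²) dy − (1/d_γ)(F(u(t,0)) − F(1)). Then for every t ∈ ℝ, d/dt [cosh^{n−1}(t) · V(t)] = (n−1) cosh^{n−2}(t) sinh(t) · [ −(1/2) ∫₀^∞ y^a ((∂_t u(t,y))² + (∂_y u(t,y))²) dy − (1/d_γ)(F(u(t,0)) − F(1)) ].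 -/

import Mathlib

open Real Filter MeasureTheory Set Topology

noncomputable def pt (u : ℝ → ℝ → ℝ) (t y : ℝ) : ℝ := deriv (fun s => u s y) t
noncomputable def py (u : ℝ → ℝ → ℝ) (t y : ℝ) : ℝ := deriv (fun z => u t z) y
noncomputable def ptt (u : ℝ → ℝ → ℝ) (t y : ℝ) : ℝ := deriv (fun s => pt u s y) t
noncomputable def pyy (u : ℝ → ℝ → ℝ) (t y : ℝ) : ℝ := deriv (fun z => py u t z) y
noncomputable def pty (u : ℝ → ℝ → ℝ) (t y : ℝ) : ℝ := deriv (fun z => pt u t z) y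

/-- The degenerate elliptic operator `H_a u = u_yy + (a/y) u_y + u_tt + (n-1) tanh t · u_t`. -/
noncomputable def Ha (n : ℕ) (a : ℝ) (u : ℝ → ℝ → ℝ) (t y : ℝ) : ℝ :=
  pyy u t y + (a / y) * py u t y + ptt u t y + ((n : ℝ) - 1) * Real.tanh t * pt u t y

/-- The normalizing constant `d_γ = 2^{2γ-1} Γ(γ)/Γ(1-γ)` of the extension problem. -/
noncomputable def dgamma (γ : ℝ) : ℝ :=
  2 ^ (2 * γ - 1) * Real.Gamma γ / Real.Gamma (1 - γ)

/-- The Hamiltonian quantity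
`V(t) = (1/2)∫₀^∞ y^a ((∂_t u)² - (∂_y u)²) dy - (1/d_γ)(F(u(t,0)) - F(1))`. -/
noncomputable def Vham (a dγ : ℝ) (F : ℝ → ℝ) (u : ℝ → ℝ → ℝ) (t : ℝ) : ℝ :=
  (1/2) * (∫ y in Set.Ioi (0:ℝ), y ^ a * ((pt u t y) ^ 2 - (py u t y) ^ 2)) -
    (1/dγ) * (F (u t 0) - F 1)

/-!
Differentiating under the integral sign, which the dominating function `g` justifies,
`V' = ∫ y^a (u_t u_tt - u_y u_ty) - d_γ⁻¹ F'(u(t,0)) u_t(t,0)`. By the equation `H_a u = 0`,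
`∂_y (y^a u_y u_t) = y^a (u_y u_ty - u_t u_tt) - (n-1) tanh t · y^a u_t²`, so integrating in `y`
over `(0,∞)` and using the boundary limits of `y^a u_y u_t`, the boundary term cancels and
`V' = -(n-1) tanh t ∫ y^a u_t²`. The identity then follows from
`cosh^{n-1} t · tanh t = cosh^{n-2} t · sinh t`.
-/

open Function

section PartialDerivatives

variable {E : Type*} [NormedAddCommGroup E] [NormedSpace ℝ E] {f : ℝ × ℝ → E} {t y : ℝ}

theorem hasDerivAt_comp_prodMk_left (h : DifferentiableAt ℝ f (t, y)) :
    HasDerivAt (fun s => f (s, y)) (fderiv ℝ f (t, y) (1, 0)) t :=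
  h.hasFDerivAt.comp_hasDerivAt t ((hasDerivAt_id t).prodMk (hasDerivAt_const t y))

theorem hasDerivAt_comp_prodMk_right (h : DifferentiableAt ℝ f (t, y)) :
    HasDerivAt (fun z => f (t, z)) (fderiv ℝ f (t, y) (0, 1)) y :=
  h.hasFDerivAt.comp_hasDerivAt y ((hasDerivAt_const y t).prodMk (hasDerivAt_id y))

variable {u : ℝ → ℝ → ℝ}

theorem pt_eq_fderiv (h : DifferentiableAt ℝ (uncurry u) (t, y)) :
    pt u t y = fderiv ℝ (uncurry u) (t, y) (1, 0) :=
  (hasDerivAt_comp_prodMk_left h).deriv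

theorem py_eq_fderiv (h : DifferentiableAt ℝ (uncurry u) (t, y)) :
    py u t y = fderiv ℝ (uncurry u) (t, y) (0, 1) :=
  (hasDerivAt_comp_prodMk_right h).deriv

theorem hasDerivAt_pt (h : DifferentiableAt ℝ (uncurry u) (t, y)) :
    HasDerivAt (fun s => u s y) (pt u t y) t :=
  pt_eq_fderiv h ▸ hasDerivAt_comp_prodMk_left h

theorem hasDerivAt_py (h : DifferentiableAt ℝ (uncurry u) (t, y)) :
    HasDerivAt (u t) (py u t y) y :=
  py_eq_fderiv h ▸ hasDerivAt_comp_prodMk_right h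

theorem ContDiffAt.uncurry_pt {n : ℕ} (h : ContDiffAt ℝ (n + 1) (uncurry u) (t, y)) :
    ContDiffAt ℝ n (uncurry (pt u)) (t, y) := by
  refine ((h.fderiv_right le_rfl).clm_apply
    (contDiffAt_const (c := ((1 : ℝ), (0 : ℝ))))).congr_of_eventuallyEq ?_
  filter_upwards [h.eventually (by simp)] with p hp
  exact pt_eq_fderiv (hp.differentiableAt (by simp))

theorem ContDiffAt.uncurry_py {n : ℕ} (h : ContDiffAt ℝ (n + 1) (uncurry u) (t, y)) :
    ContDiffAt ℝ n (uncurry (py u)) (t, y) := by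
  refine ((h.fderiv_right le_rfl).clm_apply
    (contDiffAt_const (c := ((0 : ℝ), (1 : ℝ))))).congr_of_eventuallyEq ?_
  filter_upwards [h.eventually (by simp)] with p hp
  exact py_eq_fderiv (hp.differentiableAt (by simp))

theorem pt_py_eq_py_pt (h : ContDiffAt ℝ 2 (uncurry u) (t, y)) :
    pt (py u) t y = py (pt u) t y := by
  set D := fderiv ℝ (uncurry u)
  have hD : DifferentiableAt ℝ D (t, y) :=
    (h.fderiv_right (m := 1) (by norm_num)).differentiableAt (by norm_num)
  have hdiff : ∀ᶠ p in 𝓝 (t, y), DifferentiableAt ℝ (uncurry u) p :=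
    (h.eventually (by simp)).mono fun p hp => hp.differentiableAt (by norm_num)
  have hpy : HasDerivAt (fun s => py u s y) (fderiv ℝ D (t, y) (1, 0) (0, 1)) t := by
    refine ((ContinuousLinearMap.apply ℝ ℝ ((0 : ℝ), (1 : ℝ))).hasFDerivAt.comp_hasDerivAt t
      (hasDerivAt_comp_prodMk_left hD)).congr_of_eventuallyEq ?_
    filter_upwards [(Continuous.prodMk_left y).continuousAt.eventually hdiff] with s hs
    exact py_eq_fderiv hs
  have hpt : HasDerivAt (pt u t) (fderiv ℝ D (t, y) (0, 1) (1, 0)) y := by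
    refine ((ContinuousLinearMap.apply ℝ ℝ ((1 : ℝ), (0 : ℝ))).hasFDerivAt.comp_hasDerivAt y
      (hasDerivAt_comp_prodMk_right hD)).congr_of_eventuallyEq ?_
    filter_upwards [(Continuous.prodMk_right t).continuousAt.eventually hdiff] with z hz
    exact pt_eq_fderiv hz
  calc pt (py u) t y = fderiv ℝ D (t, y) (1, 0) (0, 1) := hpy.deriv
    _ = fderiv ℝ D (t, y) (0, 1) (1, 0) := h.isSymmSndFDerivAt (by simp) _ _
    _ = py (pt u) t y := hpt.deriv.symm

end PartialDerivatives

theorem abs_le_of_weighted_energy_le {w p q p' q' G : ℝ} (hw : 0 ≤ w)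
    (h : w * (|p| ^ 2 + |q| ^ 2 + |p| * |p'| + |q| * |q'|) ≤ G) :
    |w * p ^ 2| ≤ G ∧ |w * q ^ 2| ≤ G ∧ |w * (p * p' - q * q')| ≤ G := by
  have hpp' : 0 ≤ w * (|p| * |p'|) := by positivity
  have hqq' : 0 ≤ w * (|q| * |q'|) := by positivity
  have hp : 0 ≤ w * |p| ^ 2 := by positivity
  have hq : 0 ≤ w * |q| ^ 2 := by positivity
  have hcross : |p * p' - q * q'| ≤ |p| * |p'| + |q| * |q'| := by
    simpa only [abs_mul] using abs_sub (p * p') (q * q')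
  rw [abs_mul, abs_mul, abs_mul, abs_of_nonneg hw, abs_pow, abs_pow]
  refine ⟨by nlinarith, by nlinarith, ?_⟩
  nlinarith [mul_le_mul_of_nonneg_left hcross hw]

theorem integrableOn_Ioi_of_abs_le {f g : ℝ → ℝ} {a : ℝ} (hf : ContinuousOn f (Ioi a))
    (hg : IntegrableOn g (Ioi a)) (hfg : ∀ y ∈ Ioi a, |f y| ≤ g y) : IntegrableOn f (Ioi a) :=
  hg.mono' (hf.aestronglyMeasurable measurableSet_Ioi)
    ((ae_restrict_iff' measurableSet_Ioi).2 (Eventually.of_forall hfg))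

theorem continuousOn_rpow_const_Ioi (a : ℝ) : ContinuousOn (fun y : ℝ => y ^ a) (Ioi 0) :=
  continuousOn_id.rpow_const fun _ hy => Or.inl (ne_of_gt hy)

theorem continuousOn_Ioi_of_continuousAt_uncurry {v : ℝ → ℝ → ℝ} {t : ℝ}
    (hv : ∀ y, 0 < y → ContinuousAt (uncurry v) (t, y)) : ContinuousOn (v t) (Ioi 0) :=
  fun y hy => ((hv y hy).comp (Continuous.prodMk_right t).continuousAt).continuousWithinAt

theorem integral_Ioi_of_hasDerivAt_of_tendsto_nhdsGT {f f' : ℝ → ℝ} {a ℓ m : ℝ}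
    (h0 : Tendsto f (𝓝[>] a) (𝓝 ℓ)) (hderiv : ∀ x ∈ Ioi a, HasDerivAt f (f' x) x)
    (hint : IntegrableOn f' (Ioi a)) (htop : Tendsto f atTop (𝓝 m)) :
    ∫ x in Ioi a, f' x = m - ℓ := by
  classical
  have h := integral_Ioi_of_hasDerivAt_of_tendsto (f := update f a ℓ)
    (by rwa [continuousWithinAt_update_same, ← Ioi_insert,
      insert_sdiff_self_of_notMem self_notMem_Ioi])
    (fun x hx => (hderiv x hx).congr_of_eventuallyEq <| by
      filter_upwards [eventually_ne_nhds (ne_of_gt hx)] with z hz using update_of_ne hz ..)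
    hint (htop.congr' <| by
      filter_upwards [eventually_gt_atTop a] with z hz using (update_of_ne (ne_of_gt hz) ..).symm)
  rwa [update_self] at h

theorem HasDerivAt.cosh_pow_mul {n : ℕ} (hn : 1 ≤ n) {V : ℝ → ℝ} {E t : ℝ}
    (hV : HasDerivAt V (-((n : ℝ) - 1) * tanh t * E) t) :
    HasDerivAt (fun s => Real.cosh s ^ (n - 1) * V s)
      (((n : ℝ) - 1) * Real.cosh t ^ (n - 2) * Real.sinh t * (V t - E)) t := by
  obtain ⟨m, rfl⟩ := Nat.exists_eq_add_of_le' hn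
  simp only [Nat.add_sub_cancel, Nat.cast_add, Nat.cast_one, add_sub_cancel_right] at hV ⊢
  refine (((hasDerivAt_cosh t).fun_pow m).mul hV).congr_deriv ?_
  rcases m with _ | k
  · simp
  · rw [tanh_eq_sinh_div_cosh, Nat.add_sub_cancel, show k + 1 + 1 - 2 = k by omega]
    field_simp
    ring

section UpperHalfPlane

variable {u : ℝ → ℝ → ℝ}
  (hu : ∀ t y : ℝ, 0 < y → ContDiffAt ℝ 2 (uncurry u) (t, y))
include hu

theorem contDiffAt_uncurry_pt {t y : ℝ} (hy : 0 < y) : ContDiffAt ℝ 1 (uncurry (pt u)) (t, y) :=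
  ContDiffAt.uncurry_pt (n := 1) (hu t y hy)

theorem contDiffAt_uncurry_py {t y : ℝ} (hy : 0 < y) : ContDiffAt ℝ 1 (uncurry (py u)) (t, y) :=
  ContDiffAt.uncurry_py (n := 1) (hu t y hy)

theorem hasDerivAt_ptt {t y : ℝ} (hy : 0 < y) : HasDerivAt (fun s => pt u s y) (ptt u t y) t :=
  hasDerivAt_pt ((contDiffAt_uncurry_pt hu hy).differentiableAt one_ne_zero)

theorem hasDerivAt_pty {t y : ℝ} (hy : 0 < y) : HasDerivAt (pt u t) (pty u t y) y :=
  hasDerivAt_py ((contDiffAt_uncurry_pt hu hy).differentiableAt one_ne_zero)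

theorem hasDerivAt_pyy {t y : ℝ} (hy : 0 < y) : HasDerivAt (py u t) (pyy u t y) y :=
  hasDerivAt_py ((contDiffAt_uncurry_py hu hy).differentiableAt one_ne_zero)

theorem hasDerivAt_pyt {t y : ℝ} (hy : 0 < y) : HasDerivAt (fun s => py u s y) (pty u t y) t := by
  have h := hasDerivAt_pt ((contDiffAt_uncurry_py hu (t := t) hy).differentiableAt one_ne_zero)
  rwa [pt_py_eq_py_pt (hu t y hy)] at h

theorem continuousOn_pt (t : ℝ) : ContinuousOn (pt u t) (Ioi 0) :=
  continuousOn_Ioi_of_continuousAt_uncurry fun _ hy => (contDiffAt_uncurry_pt hu hy).continuousAt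

theorem continuousOn_py (t : ℝ) : ContinuousOn (py u t) (Ioi 0) :=
  continuousOn_Ioi_of_continuousAt_uncurry fun _ hy => (contDiffAt_uncurry_py hu hy).continuousAt

theorem continuousOn_ptt (t : ℝ) : ContinuousOn (ptt u t) (Ioi 0) :=
  continuousOn_Ioi_of_continuousAt_uncurry fun _ hy =>
    (ContDiffAt.uncurry_pt (n := 0) (contDiffAt_uncurry_pt hu hy)).continuousAt

theorem continuousOn_pty (t : ℝ) : ContinuousOn (pty u t) (Ioi 0) :=
  continuousOn_Ioi_of_continuousAt_uncurry fun _ hy =>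
    (ContDiffAt.uncurry_py (n := 0) (contDiffAt_uncurry_pt hu hy)).continuousAt

theorem integrableOn_weighted_terms {a t : ℝ} {g : ℝ → ℝ} (hg : IntegrableOn g (Ioi 0))
    (hgb : ∀ y, 0 < y → y ^ a * (|pt u t y| ^ 2 + |py u t y| ^ 2 + |pt u t y| * |ptt u t y|
      + |py u t y| * |pty u t y|) ≤ g y) :
    IntegrableOn (fun y => y ^ a * pt u t y ^ 2) (Ioi 0) ∧
      IntegrableOn (fun y => y ^ a * py u t y ^ 2) (Ioi 0) ∧
      IntegrableOn (fun y => y ^ a * (pt u t y * ptt u t y - py u t y * pty u t y)) (Ioi 0) := by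
  have hw := continuousOn_rpow_const_Ioi a
  have hbd := fun y (hy : y ∈ Ioi (0 : ℝ)) =>
    abs_le_of_weighted_energy_le (rpow_nonneg (le_of_lt hy) a) (hgb y hy)
  refine ⟨integrableOn_Ioi_of_abs_le ?_ hg fun y hy => (hbd y hy).1,
    integrableOn_Ioi_of_abs_le ?_ hg fun y hy => (hbd y hy).2.1,
    integrableOn_Ioi_of_abs_le ?_ hg fun y hy => (hbd y hy).2.2⟩
  · exact hw.mul ((continuousOn_pt hu t).pow 2)
  · exact hw.mul ((continuousOn_py hu t).pow 2)
  · exact hw.mul (((continuousOn_pt hu t).mul (continuousOn_ptt hu t)).sub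
      ((continuousOn_py hu t).mul (continuousOn_pty hu t)))

theorem hasDerivAt_integral_weighted_pt_sq_sub_py_sq {a c d t₀ : ℝ} {g : ℝ → ℝ}
    (hg : IntegrableOn g (Ioi 0))
    (hgb : ∀ t ∈ Icc c d, ∀ y, 0 < y → y ^ a * (|pt u t y| ^ 2 + |py u t y| ^ 2
      + |pt u t y| * |ptt u t y| + |py u t y| * |pty u t y|) ≤ g y) (ht₀ : t₀ ∈ Ioo c d) :
    HasDerivAt (fun t => ∫ y in Ioi 0, y ^ a * (pt u t y ^ 2 - py u t y ^ 2))
      (2 * ∫ y in Ioi 0, y ^ a * (pt u t₀ y * ptt u t₀ y - py u t₀ y * pty u t₀ y))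
      t₀ := by
  have hw := continuousOn_rpow_const_Ioi a
  obtain ⟨hpt, hpy, hmixed⟩ :=
    integrableOn_weighted_terms hu hg (hgb t₀ (Ioo_subset_Icc_self ht₀))
  rw [← integral_const_mul]
  refine (hasDerivAt_integral_of_dominated_loc_of_deriv_le (bound := fun y => 2 * g y)
    (F' := fun t y => 2 * (y ^ a * (pt u t y * ptt u t y - py u t y * pty u t y)))
    (Ioo_mem_nhds ht₀.1 ht₀.2) ?_ ?_ (hmixed.const_mul 2).aestronglyMeasurable ?_
    (hg.const_mul 2) ?_).2
  · exact Eventually.of_forall fun t => (hw.mul (((continuousOn_pt hu t).pow 2).sub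
      ((continuousOn_py hu t).pow 2))).aestronglyMeasurable measurableSet_Ioi
  · simp only [mul_sub]
    exact hpt.sub hpy
  · rw [ae_restrict_iff' measurableSet_Ioi]
    refine Eventually.of_forall fun y hy t ht => ?_
    rw [norm_mul, Real.norm_two, Real.norm_eq_abs]
    gcongr
    exact (abs_le_of_weighted_energy_le (rpow_nonneg (le_of_lt hy) a)
      (hgb t (Ioo_subset_Icc_self ht) y hy)).2.2
  · rw [ae_restrict_iff' measurableSet_Ioi]
    refine Eventually.of_forall fun y hy t _ => ?_
    refine ((((hasDerivAt_ptt hu hy).fun_pow 2).fun_sub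
      ((hasDerivAt_pyt hu hy).fun_pow 2)).const_mul (y ^ a)).congr_deriv ?_
    push_cast
    ring

theorem integral_weighted_pt_ptt_sub_py_pty (n : ℕ) {a t ℓ : ℝ}
    (heq : ∀ y, 0 < y → Ha n a u t y = 0)
    (h0 : Tendsto (fun y => y ^ a * py u t y * pt u t y) (𝓝[>] 0) (𝓝 ℓ))
    (htop : Tendsto (fun y => y ^ a * py u t y * pt u t y) atTop (𝓝 0))
    (hpt : IntegrableOn (fun y => y ^ a * pt u t y ^ 2) (Ioi 0))
    (hmixed : IntegrableOn (fun y => y ^ a * (pt u t y * ptt u t y - py u t y * pty u t y))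
      (Ioi 0)) :
    ∫ y in Ioi 0, y ^ a * (pt u t y * ptt u t y - py u t y * pty u t y) =
      ℓ - ((n : ℝ) - 1) * tanh t * ∫ y in Ioi 0, y ^ a * pt u t y ^ 2 := by
  have hdamp := hpt.const_mul (((n : ℝ) - 1) * tanh t)
  have hFTC := integral_Ioi_of_hasDerivAt_of_tendsto_nhdsGT
    (f' := fun y => -(y ^ a * (pt u t y * ptt u t y - py u t y * pty u t y)
      + ((n : ℝ) - 1) * tanh t * (y ^ a * pt u t y ^ 2))) h0 ?_ (hmixed.add hdamp).neg htop
  · rw [integral_neg, integral_add hmixed hdamp, integral_const_mul] at hFTC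
    linarith
  · intro y (hy : 0 < y)
    refine (((hasDerivAt_rpow_const (p := a) (Or.inl hy.ne')).fun_mul
      (hasDerivAt_pyy hu hy)).fun_mul (hasDerivAt_pty hu hy)).congr_deriv ?_
    have hpde := heq y hy
    rw [Ha] at hpde
    rw [rpow_sub_one hy.ne']
    linear_combination (y ^ a * pt u t y) * hpde

theorem hasDerivAt_vham (n : ℕ) {a dγ c d t : ℝ} {F g : ℝ → ℝ}
    (hF : DifferentiableAt ℝ F (u t 0)) (htr : DifferentiableAt ℝ (fun s => u s 0) t)
    (heq : ∀ y, 0 < y → Ha n a u t y = 0)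
    (h0 : Tendsto (fun y => y ^ a * py u t y * pt u t y) (𝓝[>] 0)
      (𝓝 ((1 / dγ) * deriv F (u t 0) * pt u t 0)))
    (htop : Tendsto (fun y => y ^ a * py u t y * pt u t y) atTop (𝓝 0))
    (hg : IntegrableOn g (Ioi 0))
    (hgb : ∀ s ∈ Icc c d, ∀ y, 0 < y → y ^ a * (|pt u s y| ^ 2 + |py u s y| ^ 2
      + |pt u s y| * |ptt u s y| + |py u s y| * |pty u s y|) ≤ g y) (ht : t ∈ Ioo c d) :
    HasDerivAt (Vham a dγ F u)
      (-((n : ℝ) - 1) * tanh t * ∫ y in Ioi 0, y ^ a * pt u t y ^ 2) t := by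
  obtain ⟨hpt, -, hmixed⟩ := integrableOn_weighted_terms hu hg (hgb t (Ioo_subset_Icc_self ht))
  have hE := hasDerivAt_integral_weighted_pt_sq_sub_py_sq hu hg hgb ht
  have hFu : HasDerivAt (fun s => F (u s 0)) (deriv F (u t 0) * pt u t 0) t :=
    hF.hasDerivAt.comp t htr.hasDerivAt
  refine ((hE.const_mul (1 / 2)).sub ((hFu.sub_const (F 1)).const_mul (1 / dγ))).congr_deriv ?_
  rw [integral_weighted_pt_ptt_sub_py_pty hu n heq h0 htop hpt hmixed]
  ring

end UpperHalfPlane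

theorem stmt8_general (n : ℕ) (hn : 2 ≤ n) (γ : ℝ)
    (F : ℝ → ℝ) (hFs : ContDiff ℝ (⊤ : ℕ∞) F) (u : ℝ → ℝ → ℝ)
    (hsm : ContDiffOn ℝ 3 (fun p : ℝ × ℝ => u p.1 p.2) {p : ℝ × ℝ | 0 < p.2})
    (heq : ∀ t y : ℝ, 0 < y → Ha n (1 - 2*γ) u t y = 0)
    (htr : Differentiable ℝ (fun t => u t 0))
    (hbc2 : ∀ t : ℝ, Tendsto (fun y : ℝ => y ^ (1 - 2*γ) * py u t y * pt u t y)
      atTop (𝓝 0))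
    (hbc3 : ∀ t : ℝ, Tendsto (fun y : ℝ => y ^ (1 - 2*γ) * py u t y * pt u t y)
      (𝓝[>] (0:ℝ)) (𝓝 ((1 / dgamma γ) * deriv F (u t 0) * pt u t 0)))
    (hdom : ∀ c d : ℝ, ∃ g : ℝ → ℝ, IntegrableOn g (Set.Ioi 0) ∧
      ∀ t ∈ Set.Icc c d, ∀ y : ℝ, 0 < y →
        y ^ (1 - 2*γ) * (|pt u t y| ^ 2 + |py u t y| ^ 2 + |pt u t y| * |ptt u t y|
          + |py u t y| * |pty u t y|) ≤ g y) :
    ∀ t : ℝ, HasDerivAt (fun s => Real.cosh s ^ (n - 1) * Vham (1 - 2*γ) (dgamma γ) F u s)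
      (((n : ℝ) - 1) * Real.cosh t ^ (n - 2) * Real.sinh t *
        (-(1/2) * (∫ y in Set.Ioi (0:ℝ), y ^ (1 - 2*γ) * ((pt u t y) ^ 2 + (py u t y) ^ 2))
          - (1 / dgamma γ) * (F (u t 0) - F 1))) t := by
  intro t
  have hu : ∀ t y : ℝ, 0 < y → ContDiffAt ℝ 2 (uncurry u) (t, y) := fun t y hy =>
    (hsm.contDiffAt ((isOpen_lt continuous_const continuous_snd).mem_nhds hy)).of_le
      (by norm_num)
  obtain ⟨g, hg, hgb⟩ := hdom (t - 1) (t + 1)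
  have ht : t ∈ Ioo (t - 1) (t + 1) := ⟨by linarith, by linarith⟩
  have hV := hasDerivAt_vham hu n (hFs.differentiable (by simp) _) (htr t) (heq t) (hbc3 t)
    (hbc2 t) hg hgb ht
  refine (hV.cosh_pow_mul (by omega)).congr_deriv ?_
  obtain ⟨hpt, hpy, -⟩ := integrableOn_weighted_terms hu hg (hgb t (Ioo_subset_Icc_self ht))
  have hsub := integral_sub hpt hpy
  have hadd := integral_add hpt hpy
  simp only [← mul_sub, ← mul_add] at hsub hadd
  rw [Vham, hsub, hadd]
  ring

/-- Weighted Hamiltonian identity: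
`(cosh^{n-1} t · V(t))' = (n-1) cosh^{n-2} t sinh t ·
  [-(1/2)∫₀^∞ y^a ((∂_t u)² + (∂_y u)²) dy - (1/d_γ)(F(u(t,0)) - F(1))]`. -/
theorem stmt8 (n : ℕ) (hn : 2 ≤ n) (γ : ℝ) (hγ : γ ∈ Set.Ioo (0:ℝ) 1)
    (F : ℝ → ℝ) (hFs : ContDiff ℝ (⊤ : ℕ∞) F) (u : ℝ → ℝ → ℝ)
    (hsm : ContDiffOn ℝ 3 (fun p : ℝ × ℝ => u p.1 p.2) {p : ℝ × ℝ | 0 < p.2})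
    (heq : ∀ t y : ℝ, 0 < y → Ha n (1 - 2*γ) u t y = 0)
    (hcont : ContinuousOn (fun p : ℝ × ℝ => u p.1 p.2) {p : ℝ × ℝ | 0 ≤ p.2})
    (hptc : ContinuousOn (fun p : ℝ × ℝ => pt u p.1 p.2) {p : ℝ × ℝ | 0 ≤ p.2})
    (htr : Differentiable ℝ (fun t => u t 0))
    (hbc1 : ∀ t : ℝ, Tendsto (fun y : ℝ => y ^ (1 - 2*γ) * py u t y) (𝓝[>] (0:ℝ))
      (𝓝 ((1 / dgamma γ) * deriv F (u t 0))))
    (hbc2 : ∀ t : ℝ, Tendsto (fun y : ℝ => y ^ (1 - 2*γ) * py u t y * pt u t y)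
      atTop (𝓝 0))
    (hbc3 : ∀ t : ℝ, Tendsto (fun y : ℝ => y ^ (1 - 2*γ) * py u t y * pt u t y)
      (𝓝[>] (0:ℝ)) (𝓝 ((1 / dgamma γ) * deriv F (u t 0) * pt u t 0)))
    (hdom : ∀ c d : ℝ, ∃ g : ℝ → ℝ, IntegrableOn g (Set.Ioi 0) ∧
      ∀ t ∈ Set.Icc c d, ∀ y : ℝ, 0 < y →
        y ^ (1 - 2*γ) * (|pt u t y| ^ 2 + |py u t y| ^ 2 + |pt u t y| * |ptt u t y|
          + |py u t y| * |pty u t y|) ≤ g y) :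
    ∀ t : ℝ, HasDerivAt (fun s => Real.cosh s ^ (n - 1) * Vham (1 - 2*γ) (dgamma γ) F u s)
      (((n : ℝ) - 1) * Real.cosh t ^ (n - 2) * Real.sinh t *
        (-(1/2) * (∫ y in Set.Ioi (0:ℝ), y ^ (1 - 2*γ) * ((pt u t y) ^ 2 + (py u t y) ^ 2))
          - (1 / dgamma γ) * (F (u t 0) - F 1))) t :=
  stmt8_general n hn γ F hFs u hsm heq htr hbc2 hbc3 hdom
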